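/- arXiv:2309.14511 — 4 statements merged into one kernel-verified Lean document; each statement's English description precedes it below -/
import Mathlib

section
/- Let ū ∈ U_ad, d̄ ∈ L²(Ω;ℝ^d), and g ∈ C_ū. For k ∈ ℕ with k ≥ max_i (b_i − a_i)^{-1}, define g^k ∈ L²(Ω;ℝ^d) componentwise by g^k_i(x) := 0 if a_i < ū_i(x) < a_i + 1/k or b_i − 1/k < ū_i(x) < b_i, and g^k_i(x) := min{k, max{g_i(x), −k}} otherwise. Then: (i) g^k ∈ C_ū; (ii) |g^k_i(x)| ≤ |g_i(x)| for a.e. x ∈ Ω and every i; (iii) g^k → g strongly in L²(Ω;ℝ^d) as k → ∞; (iv) ū + γ g^k ∈ U_ad for every γ ∈ (0, k^{-2}]. -/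
open MeasureTheory Filter Topology
open scoped RealInnerProductSpace ENNReal

noncomputable section

/-- `L²(Ω; ℝ^d)`. -/
abbrev Ld (d : ℕ) (μ : Measure (EuclideanSpace ℝ (Fin d))) :=
  Lp (EuclideanSpace ℝ (Fin d)) 2 μ

/-- The admissible set `U_ad`. -/
def Uad (d : ℕ) (μ : Measure (EuclideanSpace ℝ (Fin d))) (a b : Fin d → ℝ) :
    Set (Ld d μ) :=
  {v | ∀ᵐ x ∂μ, ∀ i, a i ≤ v x i ∧ v x i ≤ b i}

/-- The admissible sign condition satisfied by `g` with respect to `ū`. -/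
def AdmissibleSign (d : ℕ) (μ : Measure (EuclideanSpace ℝ (Fin d))) (a b : Fin d → ℝ)
    (ubar g : Ld d μ) : Prop :=
  ∀ᵐ x ∂μ, ∀ i,
    (ubar x i = a i → 0 ≤ g x i) ∧ (ubar x i = b i → g x i ≤ 0)

/-- The critical cone `C_ū` determined by `(ū, d̄)`. -/
def CriticalCone (d : ℕ) (μ : Measure (EuclideanSpace ℝ (Fin d))) (a b : Fin d → ℝ)
    (ubar dbar : Ld d μ) : Set (Ld d μ) :=
  {g | AdmissibleSign d μ a b ubar g ∧
    ∀ i, ∀ᵐ x ∂μ, dbar x i ≠ 0 → g x i = 0}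

/-!
Pointwise, `g^k_i(x) = cutoff k aᵢ bᵢ ūᵢ(x) gᵢ(x)` is `gᵢ(x)` clipped to `[-k, k]` and set to `0`
where `ūᵢ(x)` is within `1/k` of a bound without touching it. Hence it has the sign of `gᵢ(x)`,
is dominated by it and equals it for all large `k`, which gives (i), (ii), and (iii) by dominated
convergence in `L²`. For (iv), a step `γ |g^k_i(x)| ≤ γ k ≤ 1/k` can only leave `[aᵢ, bᵢ]` if
`ūᵢ(x)` lies on a bound, and there the sign condition makes the step point inwards.
-/

theorem MeasureTheory.Lp.tendsto_of_tendsto_ae_of_norm_le {α E : Type*} [MeasurableSpace α]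
    {μ : Measure α} [NormedAddCommGroup E] {p : ℝ≥0∞} [Fact (1 ≤ p)] (hp : p ≠ ∞)
    {f : ℕ → Lp E p μ} {g : Lp E p μ} {bound : α → ℝ} (hbound : MemLp bound p μ)
    (hdom : ∀ n, ∀ᵐ x ∂μ, ‖f n x‖ ≤ bound x)
    (hlim : ∀ᵐ x ∂μ, Tendsto (fun n => f n x) atTop (𝓝 (g x))) :
    Tendsto f atTop (𝓝 g) := by
  have hp0 : p ≠ 0 := (zero_lt_one.trans_le Fact.out).ne'
  have hq : 0 < p.toReal := ENNReal.toReal_pos hp0 hp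
  have hg : ∀ᵐ x ∂μ, ‖g x‖ ≤ bound x := by
    filter_upwards [ae_all_iff.2 hdom, hlim] with x hx hlx
    exact le_of_tendsto' hlx.norm hx
  have hdiff : ∀ n, ∀ᵐ x ∂μ, ‖f n x - g x‖ₑ ^ p.toReal ≤ ‖2 * bound x‖ₑ ^ p.toReal := by
    intro n
    filter_upwards [hdom n, hg] with x hfx hgx
    gcongr
    rw [enorm_le_iff_norm_le]
    calc ‖f n x - g x‖ ≤ ‖f n x‖ + ‖g x‖ := norm_sub_le _ _
      _ ≤ 2 * bound x := by linarith
      _ ≤ ‖2 * bound x‖ := Real.le_norm_self _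
  have hint : Tendsto (fun n => ∫⁻ x, ‖f n x - g x‖ₑ ^ p.toReal ∂μ) atTop (𝓝 0) := by
    simpa using tendsto_lintegral_of_dominated_convergence' (f := fun _ => 0) _
      (fun n => (((Lp.aestronglyMeasurable (f n)).sub
        (Lp.aestronglyMeasurable g)).enorm).pow_const _) hdiff
      (lintegral_rpow_enorm_lt_top_of_eLpNorm_lt_top hp0 hp
        (hbound.const_mul 2).eLpNorm_lt_top).ne
      (by
        filter_upwards [hlim] with x hx
        simpa [ENNReal.zero_rpow_of_pos hq] using
          ((tendsto_sub_nhds_zero_iff.2 hx).enorm).ennrpow_const p.toReal)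
  rw [Lp.tendsto_Lp_iff_tendsto_eLpNorm']
  simp_rw [eLpNorm_eq_lintegral_rpow_enorm_toReal hp0 hp]
  simpa [ENNReal.zero_rpow_of_pos (inv_pos.2 hq)] using hint.ennrpow_const (1 / p.toReal)

def cutoff (k a b u t : ℝ) : ℝ :=
  if (a < u ∧ u < a + 1 / k) ∨ (b - 1 / k < u ∧ u < b) then 0 else min k (max t (-k))

section Cutoff

variable {k a b u t γ : ℝ}

lemma abs_cutoff_le (hk : 0 ≤ k) : |cutoff k a b u t| ≤ |t| := by
  unfold cutoff
  split_ifs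
  · simp
  · rw [abs_le]
    constructor
    · exact le_min (by linarith [abs_nonneg t]) ((neg_abs_le t).trans (le_max_left _ _))
    · exact (min_le_right _ _).trans (max_le (le_abs_self t) (by linarith [abs_nonneg t]))

lemma cutoff_nonneg (hk : 0 ≤ k) (ht : 0 ≤ t) : 0 ≤ cutoff k a b u t := by
  unfold cutoff
  split_ifs
  · exact le_rfl
  · exact le_min hk (ht.trans (le_max_left _ _))

lemma cutoff_nonpos (hk : 0 ≤ k) (ht : t ≤ 0) : cutoff k a b u t ≤ 0 := by
  unfold cutoff
  split_ifs
  · exact le_rfl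
  · exact (min_le_right _ _).trans (max_le ht (by linarith))

lemma eventually_cutoff_eq (a b u t : ℝ) : ∀ᶠ k in atTop, cutoff k a b u t = t := by
  have hinv (c : ℝ) (hc : 0 < c) : ∀ᶠ k : ℝ in atTop, 1 / k ≤ c := by
    simpa only [one_div] using tendsto_inv_atTop_zero.eventually (ge_mem_nhds hc)
  have hlow : ∀ᶠ k in atTop, ¬(a < u ∧ u < a + 1 / k) := by
    by_cases hau : a < u
    · filter_upwards [hinv _ (sub_pos.2 hau)] with k hk h
      linarith [h.2]
    · exact .of_forall fun _ h => hau h.1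
  have hup : ∀ᶠ k in atTop, ¬(b - 1 / k < u ∧ u < b) := by
    by_cases hub : u < b
    · filter_upwards [hinv _ (sub_pos.2 hub)] with k hk h
      linarith [h.1]
    · exact .of_forall fun _ h => hub h.2
  filter_upwards [hlow, hup, eventually_ge_atTop |t|] with k hl hu hk
  rw [cutoff, if_neg (not_or.2 ⟨hl, hu⟩), max_eq_left (neg_le_of_abs_le hk),
    min_eq_right (le_of_abs_le hk)]

lemma mul_le_inv_of_le_inv_sq (hk : 0 ≤ k) (hγk : γ ≤ (k ^ 2)⁻¹) : γ * k ≤ k⁻¹ :=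
  calc γ * k ≤ (k ^ 2)⁻¹ * k := mul_le_mul_of_nonneg_right hγk hk
    _ = k⁻¹ := by rcases eq_or_ne k 0 with rfl | hk0 <;> field_simp

lemma le_add_mul_cutoff (hk : 0 ≤ k) (hau : a ≤ u) (ha : u = a → 0 ≤ t) (hγ : 0 ≤ γ)
    (hγk : γ ≤ (k ^ 2)⁻¹) : a ≤ u + γ * cutoff k a b u t := by
  unfold cutoff
  split_ifs with hband
  · simpa using hau
  set c := min k (max t (-k))
  rcases le_or_gt 0 c with hc | hc
  · nlinarith
  have ht : t < 0 := lt_of_not_ge fun ht => hc.not_ge (le_min hk (ht.trans (le_max_left _ _)))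
  have hau' : a < u := lt_of_le_of_ne hau fun h => (ha h.symm).not_gt ht
  have hu : a + 1 / k ≤ u := le_of_not_gt fun h => hband (.inl ⟨hau', h⟩)
  have hck : -k ≤ c := le_min (by linarith) (le_max_right _ _)
  nlinarith [mul_le_inv_of_le_inv_sq hk hγk, mul_le_mul_of_nonneg_left hck hγ, one_div k]

lemma add_mul_cutoff_le (hk : 0 ≤ k) (hub : u ≤ b) (hb : u = b → t ≤ 0) (hγ : 0 ≤ γ)
    (hγk : γ ≤ (k ^ 2)⁻¹) : u + γ * cutoff k a b u t ≤ b := by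
  unfold cutoff
  split_ifs with hband
  · simpa using hub
  set c := min k (max t (-k))
  rcases le_or_gt c 0 with hc | hc
  · nlinarith
  have ht : 0 < t :=
    lt_of_not_ge fun ht => hc.not_ge ((min_le_right _ _).trans (max_le ht (by linarith)))
  have hub' : u < b := lt_of_le_of_ne hub fun h => (hb h).not_gt ht
  have hu : u ≤ b - 1 / k := le_of_not_gt fun h => hband (.inr ⟨h, hub'⟩)
  have hck : c ≤ k := min_le_left _ _
  nlinarith [mul_le_inv_of_le_inv_sq hk hγk, mul_le_mul_of_nonneg_left hck hγ, one_div k]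

end Cutoff

theorem EuclideanSpace.norm_le_norm_of_forall_abs_le {ι : Type*} [Fintype ι]
    {u v : EuclideanSpace ℝ ι} (h : ∀ i, |u i| ≤ |v i|) : ‖u‖ ≤ ‖v‖ := by
  simp only [EuclideanSpace.norm_eq]
  gcongr with i
  exact h i

section CriticalDirection

variable {d : ℕ} {μ : Measure (EuclideanSpace ℝ (Fin d))} {a b : Fin d → ℝ}
  {ubar dbar g h : Ld d μ} {k : ℝ}

theorem cutoff_mem_criticalCone (hk : 0 ≤ k) (hg : g ∈ CriticalCone d μ a b ubar dbar)
    (hh : ∀ᵐ x ∂μ, ∀ i, h x i = cutoff k (a i) (b i) (ubar x i) (g x i)) :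
    h ∈ CriticalCone d μ a b ubar dbar := by
  refine ⟨?_, fun i => ?_⟩
  · filter_upwards [hh, hg.1] with x hx hs i
    rw [hx i]
    exact ⟨fun hA => cutoff_nonneg hk ((hs i).1 hA), fun hB => cutoff_nonpos hk ((hs i).2 hB)⟩
  · filter_upwards [hh, hg.2 i] with x hx hdx hne
    rw [hx i, hdx hne]
    exact le_antisymm (cutoff_nonpos hk le_rfl) (cutoff_nonneg hk le_rfl)

theorem add_smul_cutoff_mem_Uad (hk : 0 ≤ k) (hubar : ubar ∈ Uad d μ a b)
    (hg : AdmissibleSign d μ a b ubar g)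
    (hh : ∀ᵐ x ∂μ, ∀ i, h x i = cutoff k (a i) (b i) (ubar x i) (g x i))
    {γ : ℝ} (hγ : 0 ≤ γ) (hγk : γ ≤ (k ^ 2)⁻¹) : ubar + γ • h ∈ Uad d μ a b := by
  filter_upwards [hh, hubar, hg, Lp.coeFn_add ubar (γ • h), Lp.coeFn_smul γ h]
    with x hx hu hs hadd hsmul i
  have hval : (ubar + γ • h) x i = ubar x i + γ * cutoff k (a i) (b i) (ubar x i) (g x i) := by
    rw [hadd, Pi.add_apply, hsmul, Pi.smul_apply, ← hx i]
    rfl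
  rw [hval]
  exact ⟨le_add_mul_cutoff hk (hu i).1 (hs i).1 hγ hγk,
    add_mul_cutoff_le hk (hu i).2 (hs i).2 hγ hγk⟩

theorem tendsto_cutoff {gk : ℕ → Ld d μ}
    (hgk : ∀ n : ℕ, ∀ᵐ x ∂μ, ∀ i, gk n x i = cutoff n (a i) (b i) (ubar x i) (g x i)) :
    Tendsto gk atTop (𝓝 g) := by
  refine Lp.tendsto_of_tendsto_ae_of_norm_le ENNReal.ofNat_ne_top (Lp.memLp g).norm
    (fun n => ?_) ?_
  · filter_upwards [hgk n] with x hx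
    refine EuclideanSpace.norm_le_norm_of_forall_abs_le fun i => ?_
    rw [hx i]
    exact abs_cutoff_le n.cast_nonneg
  · filter_upwards [ae_all_iff.2 hgk] with x hx
    refine tendsto_const_nhds.congr' ?_
    have hcomp (i : Fin d) : ∀ᶠ n : ℕ in atTop, g x i = gk n x i := by
      filter_upwards [tendsto_natCast_atTop_atTop.eventually
        (eventually_cutoff_eq (a i) (b i) (ubar x i) (g x i))] with n hn
      rw [hx n i, hn]
    filter_upwards [eventually_all.2 hcomp] with n hn
    ext i
    exact hn i

end CriticalDirection

theorem statement4_general (d : ℕ)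
    (Ω : Set (EuclideanSpace ℝ (Fin d)))
    (a b : Fin d → ℝ)
    (ubar dbar g : Ld d (volume.restrict Ω))
    (hubar : ubar ∈ Uad d (volume.restrict Ω) a b)
    (hg : g ∈ CriticalCone d (volume.restrict Ω) a b ubar dbar)
    (gk : ℕ → Ld d (volume.restrict Ω))
    (hgk : ∀ k : ℕ, ∀ᵐ x ∂(volume.restrict Ω), ∀ i,
      gk k x i =
        if (a i < ubar x i ∧ ubar x i < a i + 1 / (k : ℝ)) ∨
           (b i - 1 / (k : ℝ) < ubar x i ∧ ubar x i < b i)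
        then 0 else min (k : ℝ) (max (g x i) (-(k : ℝ)))) :
    -- (iii) strong convergence `g^k → g` in `L²(Ω;ℝ^d)`
    Tendsto gk atTop (𝓝 g) ∧
    ∀ k : ℕ, (∀ i, (b i - a i)⁻¹ ≤ (k : ℝ)) →
      -- (i) `g^k` belongs to the critical cone
      gk k ∈ CriticalCone d (volume.restrict Ω) a b ubar dbar ∧
      -- (ii) pointwise domination by `g`
      (∀ᵐ x ∂(volume.restrict Ω), ∀ i, |gk k x i| ≤ |g x i|) ∧
      -- (iv) admissibility of the perturbations
      (∀ γ : ℝ, 0 < γ → γ ≤ ((k : ℝ) ^ 2)⁻¹ →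
        ubar + γ • gk k ∈ Uad d (volume.restrict Ω) a b) := by
  have hcut : ∀ k : ℕ, ∀ᵐ x ∂(volume.restrict Ω), ∀ i,
      gk k x i = cutoff k (a i) (b i) (ubar x i) (g x i) := hgk
  refine ⟨tendsto_cutoff hcut, fun k _ => ⟨cutoff_mem_criticalCone k.cast_nonneg hg (hcut k),
    ?_, fun γ hγ hγk => add_smul_cutoff_mem_Uad k.cast_nonneg hubar hg.1 (hcut k) hγ.le hγk⟩⟩
  filter_upwards [hcut k] with x hx i
  rw [hx i]
  exact abs_cutoff_le k.cast_nonneg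

/-- For `g ∈ C_ū` and `k ∈ ℕ`, let `g^k` be defined componentwise by
`g^k_i(x) = 0` if `a_i < ū_i(x) < a_i + 1/k` or `b_i − 1/k < ū_i(x) < b_i`, and
`g^k_i(x) = min{k, max{g_i(x), −k}}` otherwise.  Then `g^k → g` strongly in `L²(Ω;ℝ^d)` and,
for every `k ≥ max_i (b_i − a_i)⁻¹`:
(i) `g^k ∈ C_ū`; (ii) `|g^k_i(x)| ≤ |g_i(x)|` a.e. for every `i`;
(iv) `ū + γ g^k ∈ U_ad` for every `γ ∈ (0, k⁻²]`. -/
theorem statement4 (d : ℕ) (hd : d = 2 ∨ d = 3)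
    (Ω : Set (EuclideanSpace ℝ (Fin d)))
    (hΩo : IsOpen Ω) (hΩne : Ω.Nonempty) (hΩb : Bornology.IsBounded Ω)
    (a b : Fin d → ℝ) (hab : ∀ i, a i < b i)
    (ubar dbar g : Ld d (volume.restrict Ω))
    (hubar : ubar ∈ Uad d (volume.restrict Ω) a b)
    (hg : g ∈ CriticalCone d (volume.restrict Ω) a b ubar dbar)
    (gk : ℕ → Ld d (volume.restrict Ω))
    (hgk : ∀ k : ℕ, ∀ᵐ x ∂(volume.restrict Ω), ∀ i,
      gk k x i =
        if (a i < ubar x i ∧ ubar x i < a i + 1 / (k : ℝ)) ∨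
           (b i - 1 / (k : ℝ) < ubar x i ∧ ubar x i < b i)
        then 0 else min (k : ℝ) (max (g x i) (-(k : ℝ)))) :
    -- (iii) strong convergence `g^k → g` in `L²(Ω;ℝ^d)`
    Tendsto gk atTop (𝓝 g) ∧
    ∀ k : ℕ, (∀ i, (b i - a i)⁻¹ ≤ (k : ℝ)) →
      -- (i) `g^k` belongs to the critical cone
      gk k ∈ CriticalCone d (volume.restrict Ω) a b ubar dbar ∧
      -- (ii) pointwise domination by `g`
      (∀ᵐ x ∂(volume.restrict Ω), ∀ i, |gk k x i| ≤ |g x i|) ∧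
      -- (iv) admissibility of the perturbations
      (∀ γ : ℝ, 0 < γ → γ ≤ ((k : ℝ) ^ 2)⁻¹ →
        ubar + γ • gk k ∈ Uad d (volume.restrict Ω) a b) :=
  statement4_general d Ω a b ubar dbar g hubar hg gk hgk
end
end

section
/- Let ū ∈ U_ad and let d̄ ∈ L²(Ω;ℝ^d) satisfy the first-order sign conditions with respect to ū. Let (g_k)_{k∈ℕ} ⊂ L²(Ω;ℝ^d) be a sequence such that every g_k satisfies the admissible sign condition with respect to ū and g_k ⇀ g weakly in L²(Ω;ℝ^d), and let (d_k)_{k∈ℕ} ⊂ L²(Ω;ℝ^d) satisfy d_k → d̄ strongly in L²(Ω;ℝ^d) and limsup_{k→∞} ∫_Ω d_k(x)·g_k(x) dx ≤ 0. Then g belongs to the critical cone C_ū determined by (ū, d̄). -/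
/-!
Testing the weak convergence `g_k ⇀ g` against the indicators `1_B eᵢ` shows that the one-sided
sign constraints of the `g_k` pass to `g`. Weakly convergent sequences are bounded, so
`∫ d_k · g_k → ∫ d̄ · g` and hence `∫ d̄ · g ≤ 0`. The sign conditions on `d̄` and on `g` make each
product `d̄ᵢ gᵢ` nonnegative, so all of them vanish a.e., i.e. `gᵢ = 0` where `d̄ᵢ ≠ 0`.
-/

open MeasureTheory Filter Topology
open scoped RealInnerProductSpace ENNReal

noncomputable section

/-- The first-order sign conditions satisfied by `d̄` with respect to `ū`. -/
def FirstOrderSign (d : ℕ) (μ : Measure (EuclideanSpace ℝ (Fin d))) (a b : Fin d → ℝ)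
    (ubar dbar : Ld d μ) : Prop :=
  ∀ᵐ x ∂μ, ∀ i,
    (a i < ubar x i → ubar x i < b i → dbar x i = 0) ∧
    (ubar x i = a i → 0 ≤ dbar x i) ∧
    (ubar x i = b i → dbar x i ≤ 0)

/-- Weak convergence of a sequence in the Hilbert space `L²(Ω; ℝ^d)`. -/
def WeakConvL2 (d : ℕ) (μ : Measure (EuclideanSpace ℝ (Fin d)))
    (u : ℕ → Ld d μ) (w : Ld d μ) : Prop :=
  ∀ f : Ld d μ, Tendsto (fun k => (⟪f, u k⟫ : ℝ)) atTop (𝓝 (⟪f, w⟫ : ℝ))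

section General

variable {α ι : Type*} [MeasurableSpace α] {μ : Measure α} [Fintype ι]

theorem inner_indicatorConstLp_single [DecidableEq ι] (i : ι) {s : Set α} (hs : MeasurableSet s)
    (hμs : μ s ≠ ∞) (v : Lp (EuclideanSpace ℝ ι) 2 μ) :
    ⟪indicatorConstLp 2 hs hμs (EuclideanSpace.single i (1 : ℝ)), v⟫ = ∫ x in s, v x i ∂μ := by
  rw [L2.inner_indicatorConstLp_eq_setIntegral_inner ℝ v hs _ hμs]
  simp [EuclideanSpace.inner_single_left]

theorem MeasureTheory.Lp.memLp_coord (v : Lp (EuclideanSpace ℝ ι) 2 μ) (i : ι) :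
    MemLp (fun x => v x i) 2 μ :=
  (EuclideanSpace.proj i : EuclideanSpace ℝ ι →L[ℝ] ℝ).comp_memLp v

theorem ae_coord_eq_zero_of_inner_nonpos {f g : Lp (EuclideanSpace ℝ ι) 2 μ}
    (hfg : ∀ᵐ x ∂μ, ∀ i, 0 ≤ f x i * g x i) (hinner : ⟪f, g⟫ ≤ 0) :
    ∀ i, ∀ᵐ x ∂μ, f x i ≠ 0 → g x i = 0 := by
  have hpoint : ∀ x, ⟪f x, g x⟫ = ∑ i, f x i * g x i := fun x => by
    simp [PiLp.inner_apply, mul_comm]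
  have hnonneg : 0 ≤ᵐ[μ] fun x => ⟪f x, g x⟫ := by
    filter_upwards [hfg] with x hx
    rw [Pi.zero_apply, hpoint]
    exact Finset.sum_nonneg fun i _ => hx i
  have hzero : (fun x => ⟪f x, g x⟫) =ᵐ[μ] 0 := by
    refine (integral_eq_zero_iff_of_nonneg_ae hnonneg (L2.integrable_inner f g)).1 ?_
    rw [L2.inner_def] at hinner
    exact le_antisymm hinner (integral_nonneg_of_ae hnonneg)
  intro i
  filter_upwards [hzero, hfg] with x hx0 hx hfi
  rw [Pi.zero_apply, hpoint] at hx0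
  have := (Finset.sum_eq_zero_iff_of_nonneg fun j _ => hx j).1 hx0 i (Finset.mem_univ i)
  exact (mul_eq_zero.1 this).resolve_left hfi

end General

theorem mul_nonneg_of_box_signs {a b u v w : ℝ} (hau : a ≤ u) (hub : u ≤ b)
    (hv : (a < u → u < b → v = 0) ∧ (u = a → 0 ≤ v) ∧ (u = b → v ≤ 0))
    (hw : (u = a → 0 ≤ w) ∧ (u = b → w ≤ 0)) : 0 ≤ v * w := by
  rcases hau.eq_or_lt with rfl | hau
  · exact mul_nonneg (hv.2.1 rfl) (hw.1 rfl)
  rcases hub.eq_or_lt with rfl | hub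
  · exact mul_nonneg_of_nonpos_of_nonpos (hv.2.2 rfl) (hw.2 rfl)
  · rw [hv.1 hau hub, zero_mul]

namespace WeakConvL2

variable {d : ℕ} {μ : Measure (EuclideanSpace ℝ (Fin d))} {gs : ℕ → Ld d μ} {g : Ld d μ}

theorem neg (hweak : WeakConvL2 d μ gs g) : WeakConvL2 d μ (fun k => -gs k) (-g) := fun f => by
  simpa only [inner_neg_right] using (hweak f).neg

-- Testing against `1_{s ∩ A} eᵢ` shows `∫_{s ∩ A} gᵢ ≥ 0` for every `s` of finite measure.
theorem ae_nonneg_on (hweak : WeakConvL2 d μ gs g) (i : Fin d)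
    {A : Set (EuclideanSpace ℝ (Fin d))} (hA : MeasurableSet A)
    (hgs : ∀ k, ∀ᵐ x ∂μ, x ∈ A → 0 ≤ gs k x i) :
    ∀ᵐ x ∂μ, x ∈ A → 0 ≤ g x i := by
  rw [← ae_restrict_iff' hA]
  have hgi := (Lp.memLp_coord g i).restrict A
  refine (hgi.aefinStronglyMeasurable two_ne_zero ENNReal.ofNat_ne_top)
    |>.ae_nonneg_of_forall_setIntegral_nonneg (fun s _ hs => ?_) (fun s hs hμs => ?_)
  · have := isFiniteMeasure_restrict.2 hs.ne
    exact (hgi.restrict s).integrable one_le_two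
  rw [Measure.restrict_apply hs] at hμs
  rw [Measure.restrict_restrict hs, ← inner_indicatorConstLp_single i (hs.inter hA) hμs.ne]
  refine ge_of_tendsto' (hweak _) fun k => ?_
  rw [inner_indicatorConstLp_single]
  refine setIntegral_nonneg_of_ae_restrict ?_
  rw [EventuallyLE, ae_restrict_iff' (hs.inter hA)]
  filter_upwards [hgs k] with x hx hxsA using hx hxsA.2

theorem ae_nonpos_on (hweak : WeakConvL2 d μ gs g) (i : Fin d)
    {A : Set (EuclideanSpace ℝ (Fin d))} (hA : MeasurableSet A)
    (hgs : ∀ k, ∀ᵐ x ∂μ, x ∈ A → gs k x i ≤ 0) :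
    ∀ᵐ x ∂μ, x ∈ A → g x i ≤ 0 := by
  have hneg := hweak.neg.ae_nonneg_on i hA fun k => by
    filter_upwards [hgs k, Lp.coeFn_neg (gs k)] with x hx hnx hxA
    rw [hnx, Pi.neg_apply, PiLp.neg_apply, neg_nonneg]
    exact hx hxA
  filter_upwards [hneg, Lp.coeFn_neg g] with x hx hnx hxA
  rw [hnx, Pi.neg_apply, PiLp.neg_apply, neg_nonneg] at hx
  exact hx hxA

theorem admissibleSign {a b : Fin d → ℝ} {ubar : Ld d μ} (hweak : WeakConvL2 d μ gs g)
    (hsign : ∀ k, AdmissibleSign d μ a b ubar (gs k)) : AdmissibleSign d μ a b ubar g := by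
  have hu i : Measurable fun x => ubar x i :=
    (EuclideanSpace.proj i : EuclideanSpace ℝ (Fin d) →L[ℝ] ℝ).measurable.comp
      (Lp.stronglyMeasurable ubar).measurable
  rw [AdmissibleSign, ae_all_iff]
  intro i
  have hlower := hweak.ae_nonneg_on i (hu i (measurableSet_singleton (a i))) fun k => by
    filter_upwards [hsign k] with x hx using (hx i).1
  have hupper := hweak.ae_nonpos_on i (hu i (measurableSet_singleton (b i))) fun k => by
    filter_upwards [hsign k] with x hx using (hx i).2
  filter_upwards [hlower, hupper] with x hxa hxb using ⟨hxa, hxb⟩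

theorem exists_norm_le (hweak : WeakConvL2 d μ gs g) : ∃ C, ∀ k, ‖gs k‖ ≤ C := by
  obtain ⟨C, hC⟩ : ∃ C, ∀ k, ‖innerSL ℝ (gs k)‖ ≤ C := by
    refine banach_steinhaus fun f => ?_
    obtain ⟨C, hC⟩ := (hweak f).norm.bddAbove_range
    refine ⟨C, fun k => ?_⟩
    simpa [innerSL_apply_apply, real_inner_comm] using hC (Set.mem_range_self k)
  exact ⟨C, fun k => innerSL_apply_norm (𝕜 := ℝ) (gs k) ▸ hC k⟩

theorem tendsto_inner_of_tendsto (hweak : WeakConvL2 d μ gs g) {ds : ℕ → Ld d μ} {dbar : Ld d μ}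
    (hds : Tendsto ds atTop (𝓝 dbar)) :
    Tendsto (fun k => ⟪ds k, gs k⟫) atTop (𝓝 ⟪dbar, g⟫) := by
  obtain ⟨C, hC⟩ := hweak.exists_norm_le
  have hdiff : Tendsto (fun k => ⟪ds k - dbar, gs k⟫) atTop (𝓝 0) := by
    have hnorm : Tendsto (fun k => ‖ds k - dbar‖ * C) atTop (𝓝 0) := by
      simpa using (tendsto_iff_norm_sub_tendsto_zero.mp hds).mul_const C
    refine squeeze_zero_norm (fun k => ?_) hnorm
    calc ‖⟪ds k - dbar, gs k⟫‖ ≤ ‖ds k - dbar‖ * ‖gs k‖ := norm_inner_le_norm _ _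
      _ ≤ ‖ds k - dbar‖ * C := mul_le_mul_of_nonneg_left (hC k) (norm_nonneg _)
  simpa [inner_sub_left] using hdiff.add (hweak dbar)

end WeakConvL2

theorem FirstOrderSign.ae_mul_nonneg {d : ℕ} {μ : Measure (EuclideanSpace ℝ (Fin d))}
    {a b : Fin d → ℝ} {ubar dbar g : Ld d μ} (hdbar : FirstOrderSign d μ a b ubar dbar)
    (hubar : ubar ∈ Uad d μ a b) (hg : AdmissibleSign d μ a b ubar g) :
    ∀ᵐ x ∂μ, ∀ i, 0 ≤ dbar x i * g x i := by
  filter_upwards [hdbar, hubar, hg] with x hdx hux hgx i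
  exact mul_nonneg_of_box_signs (hux i).1 (hux i).2 (hdx i) (hgx i)

theorem statement6_general (d : ℕ)
    (Ω : Set (EuclideanSpace ℝ (Fin d)))
    (a b : Fin d → ℝ)
    (ubar dbar : Ld d (volume.restrict Ω))
    (hubar : ubar ∈ Uad d (volume.restrict Ω) a b)
    (hdbar : FirstOrderSign d (volume.restrict Ω) a b ubar dbar)
    (gs : ℕ → Ld d (volume.restrict Ω)) (g : Ld d (volume.restrict Ω))
    (hsign : ∀ k, AdmissibleSign d (volume.restrict Ω) a b ubar (gs k))
    (hweak : WeakConvL2 d (volume.restrict Ω) gs g)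
    (ds : ℕ → Ld d (volume.restrict Ω))
    (hds : Tendsto ds atTop (𝓝 dbar))
    (hlimsup :
      limsup (fun k => ∫ x, (⟪ds k x, gs k x⟫ : ℝ) ∂(volume.restrict Ω)) atTop ≤ 0) :
    g ∈ CriticalCone d (volume.restrict Ω) a b ubar dbar := by
  have hg := hweak.admissibleSign hsign
  refine ⟨hg, ae_coord_eq_zero_of_inner_nonpos (hdbar.ae_mul_nonneg hubar hg) ?_⟩
  rw [← (hweak.tendsto_inner_of_tendsto hds).limsup_eq]
  simpa only [L2.inner_def] using hlimsup

/-- Let `ū ∈ U_ad`, let `d̄` satisfy the first-order sign conditions with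
respect to `ū`, let `g_k` satisfy the admissible sign condition and `g_k ⇀ g` weakly in
`L²(Ω;ℝ^d)`, and let `d_k → d̄` strongly in `L²(Ω;ℝ^d)` with
`limsup_k ∫_Ω d_k · g_k dx ≤ 0`.  Then `g ∈ C_ū`. -/
theorem statement6 (d : ℕ) (hd : d = 2 ∨ d = 3)
    (Ω : Set (EuclideanSpace ℝ (Fin d)))
    (hΩo : IsOpen Ω) (hΩne : Ω.Nonempty) (hΩb : Bornology.IsBounded Ω)
    (a b : Fin d → ℝ) (hab : ∀ i, a i < b i)
    (ubar dbar : Ld d (volume.restrict Ω))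
    (hubar : ubar ∈ Uad d (volume.restrict Ω) a b)
    (hdbar : FirstOrderSign d (volume.restrict Ω) a b ubar dbar)
    (gs : ℕ → Ld d (volume.restrict Ω)) (g : Ld d (volume.restrict Ω))
    (hsign : ∀ k, AdmissibleSign d (volume.restrict Ω) a b ubar (gs k))
    (hweak : WeakConvL2 d (volume.restrict Ω) gs g)
    (ds : ℕ → Ld d (volume.restrict Ω))
    (hds : Tendsto ds atTop (𝓝 dbar))
    (hlimsup :
      limsup (fun k => ∫ x, (⟪ds k x, gs k x⟫ : ℝ) ∂(volume.restrict Ω)) atTop ≤ 0) :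
    g ∈ CriticalCone d (volume.restrict Ω) a b ubar dbar :=
  statement6_general d Ω a b ubar dbar hubar hdbar gs g hsign hweak ds hds hlimsup
end
end

section
/- Let ū ∈ U_ad, let O ⊂ L²(Ω;ℝ^d) be an open neighborhood of ū, and let j : O → ℝ be twice continuously Fréchet differentiable. Suppose ū is a local minimizer of j on U_ad, i.e., there exists ε > 0 such that j(ū) ≤ j(u) for all u ∈ U_ad with ‖u−ū‖_{L²(Ω;ℝ^d)} < ε. Let d̄ ∈ L²(Ω;ℝ^d) be the Riesz representative of j'(ū), so that j'(ū)v = ∫_Ω d̄·v dx for all v ∈ L²(Ω;ℝ^d), and let C_ū be the critical cone determined by (ū, d̄). Then the second-order necessary optetimality condition holds: j''(ū)(g,g) ≥ 0 for every g ∈ C_ū. -/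
open MeasureTheory Filter Topology
open scoped RealInnerProductSpace ENNReal

noncomputable section

/-! Along a feasible direction `v` with `j'(ū) v = 0`, the function `t ↦ j(ū + t v)` has a
one-sided minimum at `0` with vanishing derivative there, so its second derivative `j''(ū)(v,v)`
is nonnegative. Every `g ∈ C_ū` is an `L²` limit of such directions: clip `g` to `[-n, n]` and
keep it only where `ū` is active or at distance at least `1/n` from both bounds. The truncations
are feasible for small steps, still vanish where `d̄ ≠ 0`, and converge to `g` by dominated
convergence, while `v ↦ j''(ū)(v,v)` is continuous. -/

theorem second_deriv_nonneg_of_eventually_le_right {φ ψ : ℝ → ℝ} {c : ℝ}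
    (hφ : ∀ᶠ t in 𝓝 0, HasDerivAt φ (ψ t) t) (hmin : ∀ᶠ t in 𝓝[>] 0, φ 0 ≤ φ t)
    (hψ0 : ψ 0 = 0) (hψ : HasDerivAt ψ c 0) : 0 ≤ c := by
  by_contra! hc
  have hψneg : ∀ᶠ t in 𝓝[>] 0, ψ t < 0 := by
    filter_upwards [hψ.tendsto_slope_zero_right.eventually (gt_mem_nhds hc),
      self_mem_nhdsWithin] with t hslope (ht : 0 < t)
    simpa [hψ0, smul_eq_mul, inv_mul_lt_iff₀ ht] using hslope
  obtain ⟨s, hs, hsub⟩ := mem_nhdsGT_iff_exists_Ioo_subset.1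
    (hψneg.and (hmin.and (nhdsWithin_le_nhds hφ)))
  have hr : s / 2 ∈ Set.Ioo 0 s := ⟨half_pos hs, half_lt_self hs⟩
  have hderiv : ∀ t ∈ Set.Ioc 0 (s / 2), HasDerivAt φ (ψ t) t := fun t ht =>
    (hsub ⟨ht.1, ht.2.trans_lt hr.2⟩).2.2
  have hcont : ContinuousOn φ (Set.Icc 0 (s / 2)) := by
    intro t ht
    rcases ht.1.eq_or_lt with rfl | ht0
    · exact hφ.self_of_nhds.continuousAt.continuousWithinAt
    · exact (hderiv t ⟨ht0, ht.2⟩).continuousAt.continuousWithinAt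
  obtain ⟨ξ, hξ, hslope⟩ := exists_hasDerivAt_eq_slope φ ψ hr.1 hcont
    fun t ht => hderiv t (Set.Ioo_subset_Ioc_self ht)
  have hψξ : ψ ξ < 0 := (hsub ⟨hξ.1, hξ.2.trans hr.2⟩).1
  have hφr : φ 0 ≤ φ (s / 2) := (hsub hr).2.1
  rw [hslope, sub_zero, div_lt_iff₀ hr.1, zero_mul] at hψξ
  linarith

theorem IsLocalMinOn.second_fderiv_nonneg {E : Type*} [NormedAddCommGroup E] [NormedSpace ℝ E]
    {j : E → ℝ} {j' : E → E →L[ℝ] ℝ} {B : E →L[ℝ] E →L[ℝ] ℝ} {s : Set E} {u v : E}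
    (hmin : IsLocalMinOn j s u) (hj' : ∀ᶠ w in 𝓝 u, HasFDerivAt j (j' w) w)
    (hj'' : HasFDerivAt j' B u) (hv : j' u v = 0) (hvs : ∀ᶠ t in 𝓝[>] (0 : ℝ), u + t • v ∈ s) :
    0 ≤ B v v := by
  have hline : ∀ t : ℝ, HasDerivAt (fun t : ℝ => u + t • v) v t := fun t => by
    simpa using ((hasDerivAt_id t).smul_const v).const_add u
  have hline0 : Tendsto (fun t : ℝ => u + t • v) (𝓝 0) (𝓝 u) := by
    simpa using (hline 0).continuousAt.tendsto
  refine second_deriv_nonneg_of_eventually_le_right (φ := fun t => j (u + t • v))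
    (ψ := fun t => j' (u + t • v) v) ?_ ?_ (by simpa using hv) ?_
  · filter_upwards [hline0.eventually hj'] with t ht
    exact ht.comp_hasDerivAt t (hline t)
  · have := (tendsto_nhdsWithin_iff.2 ⟨hline0.mono_left nhdsWithin_le_nhds, hvs⟩).eventually hmin
    simpa using this
  · have := ((ContinuousLinearMap.apply ℝ ℝ v).hasFDerivAt.comp u hj'').comp_hasDerivAt_of_eq 0
      (hline 0) (by simp)
    simpa [Function.comp_def] using this

theorem abs_max_neg_min_le {M : ℝ} (hM : 0 ≤ M) (y : ℝ) : |max (-M) (min M y)| ≤ min M |y| := by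
  rw [abs_le, le_min_iff]
  cases abs_cases y <;> grind

section Truncation

variable {ι : Type*} {a b : ι → ℝ} {n : ℕ} {u g : EuclideanSpace ℝ ι} {i : ι}

variable (a b n) in
def truncate (u g : EuclideanSpace ℝ ι) : EuclideanSpace ℝ ι :=
  WithLp.toLp 2 fun i =>
    if u i = a i ∨ u i = b i ∨ u i ∈ Set.Icc (a i + (n : ℝ)⁻¹) (b i - (n : ℝ)⁻¹) then
      max (-(n : ℝ)) (min (n : ℝ) (g i))
    else 0

theorem truncate_apply : truncate a b n u g i =
    if u i = a i ∨ u i = b i ∨ u i ∈ Set.Icc (a i + (n : ℝ)⁻¹) (b i - (n : ℝ)⁻¹) then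
      max (-(n : ℝ)) (min (n : ℝ) (g i))
    else 0 := rfl

theorem abs_truncate_apply_le : |truncate a b n u g i| ≤ min (n : ℝ) |g i| := by
  rw [truncate_apply]
  split_ifs
  · exact abs_max_neg_min_le n.cast_nonneg _
  · simp

theorem truncate_apply_nonneg (hg : 0 ≤ g i) : 0 ≤ truncate a b n u g i := by
  rw [truncate_apply]
  split_ifs <;> simp [hg]

theorem truncate_apply_nonpos (hg : g i ≤ 0) : truncate a b n u g i ≤ 0 := by
  rw [truncate_apply]
  split_ifs <;> simp [hg]

theorem truncate_apply_eq_zero (hg : g i = 0) : truncate a b n u g i = 0 :=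
  le_antisymm (truncate_apply_nonpos hg.le) (truncate_apply_nonneg hg.ge)

theorem norm_truncate_le [Fintype ι] : ‖truncate a b n u g‖ ≤ ‖g‖ := by
  rw [EuclideanSpace.norm_eq, EuclideanSpace.norm_eq]
  gcongr with i
  exact abs_truncate_apply_le.trans (min_le_right _ _)

theorem inner_truncate_eq_zero [Fintype ι] {e : EuclideanSpace ℝ ι}
    (h : ∀ i, e i ≠ 0 → g i = 0) : ⟪e, truncate a b n u g⟫ = 0 := by
  refine Finset.sum_eq_zero fun i _ => ?_
  by_cases he : e i = 0
  · simp [he]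
  · simp [truncate_apply_eq_zero (h i he)]

theorem add_mul_truncate_apply_mem_Icc {t : ℝ} (hu : u i ∈ Set.Icc (a i) (b i))
    (hsign : (u i = a i → 0 ≤ g i) ∧ (u i = b i → g i ≤ 0))
    (ht : 0 ≤ t) (htn : t * n ≤ (n : ℝ)⁻¹) (htab : t * n ≤ b i - a i) :
    u i + t * truncate a b n u g i ∈ Set.Icc (a i) (b i) := by
  have htw : |t * truncate a b n u g i| ≤ t * n := by
    rw [abs_mul, abs_of_nonneg ht]
    exact mul_le_mul_of_nonneg_left (abs_truncate_apply_le.trans (min_le_left _ _)) ht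
  rw [abs_le] at htw
  by_cases ha : u i = a i
  · have : 0 ≤ t * truncate a b n u g i := mul_nonneg ht (truncate_apply_nonneg (hsign.1 ha))
    constructor <;> linarith
  by_cases hb : u i = b i
  · have : t * truncate a b n u g i ≤ 0 :=
      mul_nonpos_of_nonneg_of_nonpos ht (truncate_apply_nonpos (hsign.2 hb))
    constructor <;> linarith
  by_cases hmid : u i ∈ Set.Icc (a i + (n : ℝ)⁻¹) (b i - (n : ℝ)⁻¹)
  · constructor <;> linarith [hmid.1, hmid.2]
  · simpa [truncate_apply, ha, hb, hmid] using hu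

theorem eventually_truncate_eq [Finite ι] (hu : ∀ i, u i ∈ Set.Icc (a i) (b i)) :
    ∀ᶠ n : ℕ in atTop, truncate a b n u g = g := by
  have hinv : Tendsto (fun n : ℕ => (n : ℝ)⁻¹) atTop (𝓝 0) :=
    tendsto_inv_atTop_zero.comp tendsto_natCast_atTop_atTop
  have hcond : ∀ i, ∀ᶠ n : ℕ in atTop,
      u i = a i ∨ u i = b i ∨ u i ∈ Set.Icc (a i + (n : ℝ)⁻¹) (b i - (n : ℝ)⁻¹) := by
    intro i
    by_cases ha : u i = a i
    · exact .of_forall fun _ => .inl ha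
    by_cases hb : u i = b i
    · exact .of_forall fun _ => .inr (.inl hb)
    have hgap : 0 < min (u i - a i) (b i - u i) :=
      lt_min (sub_pos.2 ((hu i).1.lt_of_ne' ha)) (sub_pos.2 ((hu i).2.lt_of_ne hb))
    filter_upwards [hinv.eventually (gt_mem_nhds hgap)] with n hn
    exact .inr (.inr ⟨by linarith [min_le_left (u i - a i) (b i - u i)],
      by linarith [min_le_right (u i - a i) (b i - u i)]⟩)
  have hcoord : ∀ i, ∀ᶠ n : ℕ in atTop, truncate a b n u g i = g i := by
    intro i
    filter_upwards [hcond i, tendsto_natCast_atTop_atTop.eventually_ge_atTop |g i|] with n hc hn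
    rw [truncate_apply, if_pos hc, min_eq_right (abs_le.1 hn).2, max_eq_right (abs_le.1 hn).1]
  filter_upwards [eventually_all.2 hcoord] with n hn
  ext i
  exact hn i

variable (a b n) in
theorem measurable_truncate :
    Measurable fun p : EuclideanSpace ℝ ι × EuclideanSpace ℝ ι => truncate a b n p.1 p.2 := by
  refine (WithLp.measurable_toLp 2 _).comp
    (measurable_pi_lambda _ fun i => Measurable.ite ?_ (by fun_prop) measurable_const)
  have hu : Measurable fun p : EuclideanSpace ℝ ι × EuclideanSpace ℝ ι => p.1 i := by fun_prop
  exact (hu (measurableSet_singleton _)).union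
    ((hu (measurableSet_singleton _)).union (hu measurableSet_Icc))

end Truncation

theorem MeasureTheory.Lp.tendsto_of_ae_tendsto_of_dominated {α E : Type*} [MeasurableSpace α]
    {μ : Measure α} [NormedAddCommGroup E] {p : ℝ≥0∞} [Fact (1 ≤ p)] (hp : p ≠ ∞)
    {f : ℕ → Lp E p μ} {g : Lp E p μ} {bound : α → ℝ} (hbound_mem : MemLp bound p μ)
    (h_bound : ∀ n, ∀ᵐ x ∂μ, ‖f n x‖ ≤ bound x)
    (hlim : ∀ᵐ x ∂μ, Tendsto (fun n => f n x) atTop (𝓝 (g x))) : Tendsto f atTop (𝓝 g) := by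
  have hp0 : p ≠ 0 := (zero_lt_one.trans_le Fact.out).ne'
  have hg_bound : ∀ᵐ x ∂μ, ‖g x‖ ≤ bound x := by
    filter_upwards [ae_all_iff.2 h_bound, hlim] with x hx hxlim
    exact le_of_tendsto' hxlim.norm hx
  have hint : Tendsto (fun n => ∫⁻ x, ‖f n x - g x‖ₑ ^ p.toReal ∂μ) atTop (𝓝 0) := by
    have hfin := lintegral_rpow_enorm_lt_top_of_eLpNorm_lt_top hp0 hp
      ((hbound_mem.const_mul 2).eLpNorm_lt_top)
    have := tendsto_lintegral_of_dominated_convergence'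
      (F := fun n x => ‖f n x - g x‖ₑ ^ p.toReal) (f := 0) (fun x => ‖2 * bound x‖ₑ ^ p.toReal)
      (fun n => (((Lp.aestronglyMeasurable (f n)).sub
        (Lp.aestronglyMeasurable g)).enorm.pow_const _)) (fun n => ?_) hfin.ne ?_
    · simpa using this
    · filter_upwards [h_bound n, hg_bound] with x hfx hgx
      gcongr
      rw [enorm_le_iff_norm_le, Real.norm_eq_abs]
      calc ‖f n x - g x‖ ≤ ‖f n x‖ + ‖g x‖ := norm_sub_le _ _
        _ ≤ 2 * bound x := by linarith
        _ ≤ |2 * bound x| := le_abs_self _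
    · filter_upwards [hlim] with x hx
      exact (ENNReal.continuous_rpow_const.tendsto' 0 0
        (ENNReal.zero_rpow_of_pos (ENNReal.toReal_pos hp0 hp))).comp
        (by simpa using (tendsto_sub_nhds_zero_iff.2 hx).enorm)
  rw [Lp.tendsto_Lp_iff_tendsto_eLpNorm']
  simp_rw [eLpNorm_eq_lintegral_rpow_enorm_toReal hp0 hp]
  exact (ENNReal.continuous_rpow_const.tendsto' 0 0
    (ENNReal.zero_rpow_of_pos (by simp [ENNReal.toReal_pos hp0 hp]))).comp hint

section TruncationLp

variable {d : ℕ} {μ : Measure (EuclideanSpace ℝ (Fin d))} (a b : Fin d → ℝ) (n : ℕ)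
  (ubar g : Ld d μ)

theorem memLp_truncate :
    MemLp (fun x => truncate a b n (ubar x) (g x)) 2 μ :=
  (Lp.memLp g).of_le
    ((measurable_truncate a b n).comp_aemeasurable
      ((Lp.aestronglyMeasurable ubar).aemeasurable.prodMk
        (Lp.aestronglyMeasurable g).aemeasurable)).aestronglyMeasurable
    (.of_forall fun _ => norm_truncate_le)

def truncateLp : Ld d μ :=
  (memLp_truncate a b n ubar g).toLp _

theorem coeFn_truncateLp :
    truncateLp a b n ubar g =ᵐ[μ] fun x => truncate a b n (ubar x) (g x) :=
  MemLp.coeFn_toLp _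

variable {a b ubar g}

theorem integral_inner_truncateLp_eq_zero {dbar : Ld d μ}
    (hg : ∀ i, ∀ᵐ x ∂μ, dbar x i ≠ 0 → g x i = 0) :
    ∫ x, ⟪dbar x, truncateLp a b n ubar g x⟫ ∂μ = 0 := by
  refine integral_eq_zero_of_ae ?_
  filter_upwards [coeFn_truncateLp a b n ubar g, ae_all_iff.2 hg] with x hx hgx
  rw [hx]
  exact inner_truncate_eq_zero hgx

theorem eventually_add_smul_truncateLp_mem_Uad (hab : ∀ i, a i < b i)
    (hubar : ubar ∈ Uad d μ a b) (hg : AdmissibleSign d μ a b ubar g) :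
    ∀ᶠ t in 𝓝[>] (0 : ℝ), ubar + t • truncateLp a b n ubar g ∈ Uad d μ a b := by
  -- `t * n ≤ n⁻¹` is not strict at `t = 0` when `n = 0`, so ask for `t * n * n < 1` instead.
  have hsmall : ∀ᶠ t : ℝ in 𝓝 0, t * n * n < 1 ∧ ∀ i, t * n < b i - a i :=
    (ContinuousAt.eventually_lt (by fun_prop) continuousAt_const (by simp)).and
      (eventually_all.2 fun i =>
        ContinuousAt.eventually_lt (by fun_prop) continuousAt_const (by simpa using hab i))
  filter_upwards [self_mem_nhdsWithin, nhdsWithin_le_nhds hsmall] with t (ht : 0 < t) ⟨htn, htab⟩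
  have htn' : t * n ≤ (n : ℝ)⁻¹ := by
    rcases n.eq_zero_or_pos with rfl | hn
    · simp
    · rw [← one_div, le_div_iff₀ (by exact_mod_cast hn)]
      exact htn.le
  filter_upwards [hubar, hg, coeFn_truncateLp a b n ubar g,
    Lp.coeFn_add ubar (t • truncateLp a b n ubar g), Lp.coeFn_smul t (truncateLp a b n ubar g)]
    with x hux hgx htrunc hadd hsmul i
  rw [hadd, Pi.add_apply, hsmul, Pi.smul_apply, htrunc]
  exact add_mul_truncate_apply_mem_Icc (hux i) (hgx i) ht.le htn' (htab i).le

theorem tendsto_truncateLp (hubar : ubar ∈ Uad d μ a b) :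
    Tendsto (fun n : ℕ => truncateLp a b n ubar g) atTop (𝓝 g) := by
  refine Lp.tendsto_of_ae_tendsto_of_dominated ENNReal.ofNat_ne_top (Lp.memLp g).norm
    (fun n => ?_) ?_
  · filter_upwards [coeFn_truncateLp a b n ubar g] with x hx
    rw [hx]
    exact norm_truncate_le
  · filter_upwards [hubar, ae_all_iff.2 fun n => coeFn_truncateLp a b n ubar g] with x hux hx
    simp only [hx]
    exact tendsto_nhds_of_eventually_eq (eventually_truncate_eq hux)

end TruncationLp

theorem criticalCone_subset_closure {d : ℕ} {μ : Measure (EuclideanSpace ℝ (Fin d))}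
    {a b : Fin d → ℝ} (hab : ∀ i, a i < b i) {ubar dbar : Ld d μ} (hubar : ubar ∈ Uad d μ a b) :
    CriticalCone d μ a b ubar dbar ⊆ closure {v : Ld d μ | ∫ x, ⟪dbar x, v x⟫ ∂μ = 0 ∧
      ∀ᶠ t in 𝓝[>] (0 : ℝ), ubar + t • v ∈ Uad d μ a b} := fun _ hg =>
  mem_closure_of_tendsto (tendsto_truncateLp hubar) (.of_forall fun n =>
    ⟨integral_inner_truncateLp_eq_zero n hg.2,
      eventually_add_smul_truncateLp_mem_Uad n hab hubar hg.1⟩)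

theorem statement8_general (d : ℕ)
    (Ω : Set (EuclideanSpace ℝ (Fin d)))
    (a b : Fin d → ℝ) (hab : ∀ i, a i < b i)
    (ubar : Ld d (volume.restrict Ω))
    (hubar : ubar ∈ Uad d (volume.restrict Ω) a b)
    (O : Set (Ld d (volume.restrict Ω))) (hO : IsOpen O) (hubarO : ubar ∈ O)
    (j : Ld d (volume.restrict Ω) → ℝ)
    (j' : Ld d (volume.restrict Ω) → (Ld d (volume.restrict Ω) →L[ℝ] ℝ))
    (j'' : Ld d (volume.restrict Ω) →
      (Ld d (volume.restrict Ω) →L[ℝ] (Ld d (volume.restrict Ω) →L[ℝ] ℝ)))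
    (hj' : ∀ u ∈ O, HasFDerivAt j (j' u) u)
    (hj'' : ∀ u ∈ O, HasFDerivAt j' (j'' u) u)
    (ε : ℝ) (hε : 0 < ε)
    (hmin : ∀ u ∈ Uad d (volume.restrict Ω) a b, ‖u - ubar‖ < ε → j ubar ≤ j u)
    (dbar : Ld d (volume.restrict Ω))
    (hdbar : ∀ v : Ld d (volume.restrict Ω),
      j' ubar v = ∫ x, (⟪dbar x, v x⟫ : ℝ) ∂(volume.restrict Ω)) :
    ∀ g ∈ CriticalCone d (volume.restrict Ω) a b ubar dbar, 0 ≤ j'' ubar g g := by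
  have hlocmin : IsLocalMinOn j (Uad d (volume.restrict Ω) a b) ubar :=
    mem_nhdsWithin.2 ⟨Metric.ball ubar ε, Metric.isOpen_ball, Metric.mem_ball_self hε,
      fun u hu => hmin u hu.2 (mem_ball_iff_norm.1 hu.1)⟩
  have hclosed : IsClosed {v | 0 ≤ j'' ubar v v} :=
    isClosed_le continuous_const ((j'' ubar).continuous₂.comp (continuous_id.prodMk continuous_id))
  refine fun g hg => closure_minimal (fun v hv => ?_) hclosed
    (criticalCone_subset_closure hab hubar hg)
  exact hlocmin.second_fderiv_nonneg (eventually_of_mem (hO.mem_nhds hubarO) hj')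
    (hj'' ubar hubarO) (by rw [hdbar, hv.1]) hv.2

/-- **second-order necessary optimality conditions.** Let `j` be twice
continuously Fréchet differentiable on an open neighborhood `O` of `ū ∈ U_ad`, let `ū` be a
local minimizer of `j` on `U_ad`, and let `d̄ ∈ L²(Ω;ℝ^d)` be the Riesz representative of
`j'(ū)`.  Then `j''(ū)(g,g) ≥ 0` for every `g` in the critical cone `C_ū`. -/
theorem statement8 (d : ℕ) (hd : d = 2 ∨ d = 3)
    (Ω : Set (EuclideanSpace ℝ (Fin d)))
    (hΩo : IsOpen Ω) (hΩne : Ω.Nonempty) (hΩb : Bornology.IsBounded Ω)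
    (a b : Fin d → ℝ) (hab : ∀ i, a i < b i)
    (ubar : Ld d (volume.restrict Ω))
    (hubar : ubar ∈ Uad d (volume.restrict Ω) a b)
    (O : Set (Ld d (volume.restrict Ω))) (hO : IsOpen O) (hubarO : ubar ∈ O)
    (j : Ld d (volume.restrict Ω) → ℝ)
    (j' : Ld d (volume.restrict Ω) → (Ld d (volume.restrict Ω) →L[ℝ] ℝ))
    (j'' : Ld d (volume.restrict Ω) →
      (Ld d (volume.restrict Ω) →L[ℝ] (Ld d (volume.restrict Ω) →L[ℝ] ℝ)))
    (hj' : ∀ u ∈ O, HasFDerivAt j (j' u) u)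
    (hj'' : ∀ u ∈ O, HasFDerivAt j' (j'' u) u)
    (hj''cont : ContinuousOn j'' O)
    (ε : ℝ) (hε : 0 < ε)
    (hmin : ∀ u ∈ Uad d (volume.restrict Ω) a b, ‖u - ubar‖ < ε → j ubar ≤ j u)
    (dbar : Ld d (volume.restrict Ω))
    (hdbar : ∀ v : Ld d (volume.restrict Ω),
      j' ubar v = ∫ x, (⟪dbar x, v x⟫ : ℝ) ∂(volume.restrict Ω)) :
    ∀ g ∈ CriticalCone d (volume.restrict Ω) a b ubar dbar, 0 ≤ j'' ubar g g :=
  statement8_general d Ω a b hab ubar hubar O hO hubarO j j' j'' hj' hj'' ε hε hmin dbar hdbar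
end
end

section
/- Let ū ∈ U_ad, let O ⊂ L²(Ω;ℝ^d) be an open neighborhood of ū, and let j : O → ℝ admit the structural decomposition: j is twice continuously Fréchet differentiable on O and there exist α > 0 and Q : O × L²(Ω;ℝ^d) → ℝ with j''(u)(g,g) = α‖g‖²_{L²(Ω;ℝ^d)} + Q(u,g) for all u ∈ O, g ∈ L²(Ω;ℝ^d), and Q(u_k,g_k) → Q(u,g) whenever u_k → u strongly in L²(Ω;ℝ^d) and g_k ⇀ g weakly in L²(Ω;ℝ^d). Assume the first-order condition j'(ū)(u−ū) ≥ 0 for all u ∈ U_ad, let d̄ ∈ L²(Ω;ℝ^d) be the Riesz representative of j'(ū), and for τ > 0 set C_ū^τ := {g ∈ L²(Ω;ℝ^d) : g satisfies the admissible sign condition with respect to ū and, for each i, g_i(x) = 0 for a.e. x with |d̄_i(x)| > τ}. Then the following are equivalent: (a) j''(ū)(g,g) > 0 for all g ∈ C_ū \ {0}; (b) there exist μ > 0 and τ > 0 such that j''(ū)(g,g) ≥ μ‖g‖²_{L²(Ω;ℝ^d)} for all g ∈ C_ū^τ. (This is the abstract form of Theorem 4.8 on equivalent second-order optimality conditions.)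 -/
/-!
If (b) fails, there are unit vectors `g_k ∈ C_ū^{1/(k+1)}` with `j''(ū)(g_k, g_k) < 1/(k+1)`.
A weakly convergent subsequence has a limit `w` with `‖w‖ ≤ 1` lying in every `C_ū^τ`, since these
are closed convex cones increasing in `τ`, hence in `C_ū`. Weak continuity of `Q` gives
`Q(ū, w) ≤ -α`, so `w ≠ 0` and `j''(ū)(w, w) = α‖w‖² + Q(ū, w) ≤ 0`, contradicting (a).
Conversely `C_ū ⊆ C_ū^τ`.
-/

open MeasureTheory Filter Topology
open scoped RealInnerProductSpace ENNReal

noncomputable section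

/-- The extended cone `C_ū^τ` determined by `(ū, d̄)` and `τ > 0`. -/
def CriticalConeTau (d : ℕ) (μ : Measure (EuclideanSpace ℝ (Fin d))) (a b : Fin d → ℝ)
    (ubar dbar : Ld d μ) (τ : ℝ) : Set (Ld d μ) :=
  {g | AdmissibleSign d μ a b ubar g ∧
    ∀ i, ∀ᵐ x ∂μ, τ < |dbar x i| → g x i = 0}

section HilbertSpace

variable {H : Type*} [NormedAddCommGroup H] [InnerProductSpace ℝ H]

theorem exists_strictMono_forall_tendsto_inner [CompleteSpace H]
    [TopologicalSpace.SeparableSpace H] {u : ℕ → H} {R : ℝ} (hu : ∀ k, ‖u k‖ ≤ R) :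
    ∃ w : H, ∃ φ : ℕ → ℕ, StrictMono φ ∧
      ∀ f, Tendsto (fun k => ⟪f, u (φ k)⟫) atTop (𝓝 ⟪f, w⟫) := by
  let ψ : ℕ → WeakDual ℝ H := fun k => StrongDual.toWeakDual (InnerProductSpace.toDual ℝ H (u k))
  have hψ : ∀ k, ψ k ∈ WeakDual.toStrongDual ⁻¹' Metric.closedBall 0 R := fun k => by
    simpa [ψ] using hu k
  obtain ⟨ψ₀, -, φ, hφ, hlim⟩ := WeakDual.isSeqCompact_closedBall ℝ H 0 R hψ
  refine ⟨(InnerProductSpace.toDual ℝ H).symm (WeakDual.toStrongDual ψ₀), φ, hφ, fun f => ?_⟩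
  rw [← real_inner_comm f, InnerProductSpace.toDual_symm_apply]
  convert ((WeakDual.eval_continuous f).tendsto ψ₀).comp hlim using 1
  · funext k
    simp [ψ, real_inner_comm f]
  · rfl

theorem norm_le_of_forall_tendsto_inner {u : ℕ → H} {w : H} {R : ℝ} (hu : ∀ k, ‖u k‖ ≤ R)
    (hw : ∀ f, Tendsto (fun k => ⟪f, u k⟫) atTop (𝓝 ⟪f, w⟫)) : ‖w‖ ≤ R := by
  have hR : 0 ≤ R := (norm_nonneg _).trans (hu 0)
  have hsq : ‖w‖ ^ 2 ≤ ‖w‖ * R := by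
    rw [← real_inner_self_eq_norm_sq]
    refine le_of_tendsto' (hw w) fun k => ?_
    exact (real_inner_le_norm w (u k)).trans (mul_le_mul_of_nonneg_left (hu k) (norm_nonneg w))
  nlinarith [norm_nonneg w]

/-- The inequality `⟪w - v, u k - v⟫ ≤ 0` characterising the projection `v` of `w` onto `K` passes
to the weak limit and forces `w = v`. -/
theorem Convex.mem_of_forall_tendsto_inner [CompleteSpace H] {K : Set H} (hK : Convex ℝ K)
    (hKc : IsClosed K) {u : ℕ → H} (huK : ∀ᶠ k in atTop, u k ∈ K) {w : H}
    (hw : ∀ f, Tendsto (fun k => ⟪f, u k⟫) atTop (𝓝 ⟪f, w⟫)) : w ∈ K := by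
  obtain ⟨k, hk⟩ := huK.exists
  obtain ⟨v, hvK, hv⟩ := exists_norm_eq_iInf_of_complete_convex ⟨_, hk⟩ hKc.isComplete hK w
  have hproj := (norm_eq_iInf_iff_real_inner_le_zero hK hvK).1 hv
  have hlim : Tendsto (fun k => ⟪w - v, u k - v⟫) atTop (𝓝 ⟪w - v, w - v⟫) := by
    simpa only [inner_sub_right] using (hw (w - v)).sub_const ⟪w - v, v⟫
  have hle : ⟪w - v, w - v⟫ ≤ 0 := le_of_tendsto hlim (huK.mono fun k hk => hproj _ hk)
  exact sub_eq_zero.1 (real_inner_self_nonpos.1 hle) ▸ hvK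

theorem ConvexCone.exists_norm_eq_one_lt_of_lt_mul_norm_sq (K : ConvexCone ℝ H)
    (B : H →L[ℝ] H →L[ℝ] ℝ) {μ : ℝ} (h : ∃ g ∈ K, B g g < μ * ‖g‖ ^ 2) :
    ∃ g ∈ K, ‖g‖ = 1 ∧ B g g < μ := by
  obtain ⟨g, hgK, hg⟩ := h
  have hg0 : g ≠ 0 := by
    rintro rfl
    simp at hg
  have hnorm : 0 < ‖g‖ := norm_pos_iff.2 hg0
  refine ⟨‖g‖⁻¹ • g, K.smul_mem (inv_pos.2 hnorm) hgK, norm_smul_inv_norm hg0, ?_⟩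
  calc B (‖g‖⁻¹ • g) (‖g‖⁻¹ • g) = B g g / ‖g‖ ^ 2 := by
        simp only [map_smul, smul_apply, smul_eq_mul]
        field_simp
    _ < μ := by rwa [div_lt_iff₀ (by positivity)]

theorem exists_coercive_on_cone_of_pos_on_limit [CompleteSpace H]
    [TopologicalSpace.SeparableSpace H]
    (B : H →L[ℝ] H →L[ℝ] ℝ) {α : ℝ} (hα : 0 < α) (Q : H → ℝ)
    (hB : ∀ g, B g g = α * ‖g‖ ^ 2 + Q g)
    (hQ : ∀ (u : ℕ → H) (w : H), (∀ f, Tendsto (fun k => ⟪f, u k⟫) atTop (𝓝 ⟪f, w⟫)) →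
      Tendsto (fun k => Q (u k)) atTop (𝓝 (Q w)))
    (K : ℝ → ConvexCone ℝ H) (hK : Monotone K) (hKc : ∀ τ, IsClosed (K τ : Set H))
    (hpos : ∀ g, (∀ τ > 0, g ∈ K τ) → g ≠ 0 → 0 < B g g) :
    ∃ μ > 0, ∃ τ > 0, ∀ g ∈ K τ, μ * ‖g‖ ^ 2 ≤ B g g := by
  by_contra! hneg
  have hunit : ∀ k : ℕ, ∃ g ∈ K (1 / (k + 1)), ‖g‖ = 1 ∧ B g g < 1 / (k + 1) := fun k =>
    (K _).exists_norm_eq_one_lt_of_lt_mul_norm_sq B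
      (hneg _ Nat.one_div_pos_of_nat _ Nat.one_div_pos_of_nat)
  choose u huK hu1 huB using hunit
  obtain ⟨w, φ, hφ, hw⟩ := exists_strictMono_forall_tendsto_inner fun k => (hu1 k).le
  have hτ : Tendsto (fun k => 1 / ((φ k : ℝ) + 1)) atTop (𝓝 0) :=
    tendsto_one_div_add_atTop_nhds_zero_nat.comp hφ.tendsto_atTop
  have hQw : Q w ≤ -α := by
    have hQu : ∀ k, Q (u (φ k)) ≤ -α + 1 / ((φ k : ℝ) + 1) := fun k => by
      linarith [hB (u (φ k)), hu1 (φ k), huB (φ k), show α * ‖u (φ k)‖ ^ 2 = α by simp [hu1]]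
    simpa using le_of_tendsto_of_tendsto' (hQ _ _ hw) (hτ.const_add (-α)) hQu
  have hwK : ∀ τ > 0, w ∈ K τ := fun τ hτpos =>
    (K τ).convex.mem_of_forall_tendsto_inner (hKc τ)
      ((hτ.eventually (gt_mem_nhds hτpos)).mono fun k hk => hK hk.le (huK (φ k))) hw
  have hw0 : w ≠ 0 := by
    rintro rfl
    have hQ0 : Q 0 = 0 := by simpa using (hB 0).symm
    linarith
  have hw1 : ‖w‖ ^ 2 ≤ 1 :=
    pow_le_one₀ (norm_nonneg w) (norm_le_of_forall_tendsto_inner (fun k => (hu1 (φ k)).le) hw)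
  nlinarith [hpos w hwK hw0, hB w]

end HilbertSpace

section CriticalCones

variable {d : ℕ} {μ : Measure (EuclideanSpace ℝ (Fin d))} {a b : Fin d → ℝ} {ubar dbar : Ld d μ}

theorem add_mem_criticalConeTau {τ : ℝ} {f g : Ld d μ}
    (hf : f ∈ CriticalConeTau d μ a b ubar dbar τ) (hg : g ∈ CriticalConeTau d μ a b ubar dbar τ) :
    f + g ∈ CriticalConeTau d μ a b ubar dbar τ := by
  obtain ⟨hfs, hfv⟩ := hf
  obtain ⟨hgs, hgv⟩ := hg
  have hcoe : ∀ᵐ x ∂μ, ∀ i, (f + g) x i = f x i + g x i := by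
    filter_upwards [Lp.coeFn_add f g] with x hx i
    rw [hx]
    rfl
  refine ⟨?_, fun i => ?_⟩
  · filter_upwards [hfs, hgs, hcoe] with x hf hg hx i
    rw [hx]
    exact ⟨fun h => add_nonneg ((hf i).1 h) ((hg i).1 h),
      fun h => add_nonpos ((hf i).2 h) ((hg i).2 h)⟩
  · filter_upwards [hfv i, hgv i, hcoe] with x hf hg hx h
    rw [hx, hf h, hg h, add_zero]

theorem smul_mem_criticalConeTau {τ c : ℝ} (hc : 0 ≤ c) {g : Ld d μ}
    (hg : g ∈ CriticalConeTau d μ a b ubar dbar τ) :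
    c • g ∈ CriticalConeTau d μ a b ubar dbar τ := by
  obtain ⟨hgs, hgv⟩ := hg
  have hcoe : ∀ᵐ x ∂μ, ∀ i, (c • g) x i = c * g x i := by
    filter_upwards [Lp.coeFn_smul c g] with x hx i
    rw [hx]
    rfl
  refine ⟨?_, fun i => ?_⟩
  · filter_upwards [hgs, hcoe] with x hg hx i
    rw [hx]
    exact ⟨fun h => mul_nonneg hc ((hg i).1 h),
      fun h => mul_nonpos_of_nonneg_of_nonpos hc ((hg i).2 h)⟩
  · filter_upwards [hgv i, hcoe] with x hg hx h
    rw [hx, hg h, mul_zero]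

variable (d μ a b ubar dbar) in
def CriticalConeTau.toConvexCone (τ : ℝ) : ConvexCone ℝ (Ld d μ) where
  carrier := CriticalConeTau d μ a b ubar dbar τ
  smul_mem' _ hc _ hg := smul_mem_criticalConeTau hc.le hg
  add_mem' _ hf _ hg := add_mem_criticalConeTau hf hg

theorem isClosed_criticalConeTau (τ : ℝ) : IsClosed (CriticalConeTau d μ a b ubar dbar τ) := by
  refine isSeqClosed_iff_isClosed.mp fun g w hg hgw => ?_
  obtain ⟨ns, -, hns⟩ := (tendstoInMeasure_of_tendsto_Lp hgw).exists_seq_tendsto_ae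
  have hlim : ∀ᵐ x ∂μ, ∀ i, Tendsto (fun n => g (ns n) x i) atTop (𝓝 (w x i)) := by
    filter_upwards [hns] with x hx i
    exact ((EuclideanSpace.proj i).continuous.tendsto _).comp hx
  refine ⟨?_, fun i => ?_⟩
  · filter_upwards [hlim, ae_all_iff.2 fun n => (hg (ns n)).1] with x hx hs i
    exact ⟨fun h => ge_of_tendsto' (hx i) fun n => (hs n i).1 h,
      fun h => le_of_tendsto' (hx i) fun n => (hs n i).2 h⟩
  · filter_upwards [hlim, ae_all_iff.2 fun n => (hg (ns n)).2 i] with x hx hv h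
    exact tendsto_nhds_unique (hx i) (tendsto_const_nhds.congr fun n => (hv n h).symm)

theorem criticalConeTau_mono : Monotone (CriticalConeTau d μ a b ubar dbar) :=
  fun _ _ hστ _ hg => ⟨hg.1, fun i => (hg.2 i).mono fun _ hx h => hx (hστ.trans_lt h)⟩

theorem criticalCone_subset_criticalConeTau {τ : ℝ} (hτ : 0 ≤ τ) :
    CriticalCone d μ a b ubar dbar ⊆ CriticalConeTau d μ a b ubar dbar τ :=
  fun _ hg => ⟨hg.1, fun i => (hg.2 i).mono fun _ hx h => hx (abs_pos.1 (hτ.trans_lt h))⟩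

theorem mem_criticalCone_of_forall_mem_criticalConeTau {g : Ld d μ}
    (hg : ∀ τ > 0, g ∈ CriticalConeTau d μ a b ubar dbar τ) :
    g ∈ CriticalCone d μ a b ubar dbar := by
  refine ⟨(hg 1 one_pos).1, fun i => ?_⟩
  filter_upwards [ae_all_iff.2 fun m : ℕ => (hg _ (Nat.one_div_pos_of_nat (n := m))).2 i]
    with x hx hne
  obtain ⟨m, hm⟩ := exists_nat_one_div_lt (abs_pos.2 hne)
  exact hx m hm

end CriticalCones

theorem statement10_general (d : ℕ)
    (Ω : Set (EuclideanSpace ℝ (Fin d)))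
    (a b : Fin d → ℝ)
    (ubar : Ld d (volume.restrict Ω))
    (O : Set (Ld d (volume.restrict Ω))) (hubarO : ubar ∈ O)
    (j'' : Ld d (volume.restrict Ω) →
      (Ld d (volume.restrict Ω) →L[ℝ] (Ld d (volume.restrict Ω) →L[ℝ] ℝ)))
    (α : ℝ) (hα : 0 < α)
    (Q : Ld d (volume.restrict Ω) → Ld d (volume.restrict Ω) → ℝ)
    (hdecomp : ∀ u ∈ O, ∀ g : Ld d (volume.restrict Ω),
      j'' u g g = α * ‖g‖ ^ 2 + Q u g)
    (hQcont : ∀ (us : ℕ → Ld d (volume.restrict Ω)) (u : Ld d (volume.restrict Ω))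
      (gs : ℕ → Ld d (volume.restrict Ω)) (g : Ld d (volume.restrict Ω)),
      (∀ k, us k ∈ O) → u ∈ O → Tendsto us atTop (𝓝 u) →
      WeakConvL2 d (volume.restrict Ω) gs g →
      Tendsto (fun k => Q (us k) (gs k)) atTop (𝓝 (Q u g)))
    (dbar : Ld d (volume.restrict Ω)) :
    (∀ g ∈ CriticalCone d (volume.restrict Ω) a b ubar dbar, g ≠ 0 → 0 < j'' ubar g g)
    ↔
    (∃ μ > (0 : ℝ), ∃ τ > (0 : ℝ),
      ∀ g ∈ CriticalConeTau d (volume.restrict Ω) a b ubar dbar τ,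
        μ * ‖g‖ ^ 2 ≤ j'' ubar g g) := by
  constructor
  · intro hpos
    -- `Lp.SecondCountableTopology` requires `p ≠ ∞`
    have : Fact ((2 : ℝ≥0∞) ≠ ∞) := ⟨ENNReal.ofNat_ne_top⟩
    exact exists_coercive_on_cone_of_pos_on_limit (j'' ubar) hα (Q ubar) (hdecomp ubar hubarO)
      (fun u w hw => hQcont _ _ u w (fun _ => hubarO) hubarO tendsto_const_nhds hw)
      (CriticalConeTau.toConvexCone d _ a b ubar dbar) (fun _ _ h => criticalConeTau_mono h)
      isClosed_criticalConeTau
      (fun g hg => hpos g (mem_criticalCone_of_forall_mem_criticalConeTau hg))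
  · rintro ⟨μ, hμ, τ, hτ, hcoercive⟩ g hg hg0
    calc 0 < μ * ‖g‖ ^ 2 := by have := norm_pos_iff.2 hg0; positivity
      _ ≤ j'' ubar g g := hcoercive g (criticalCone_subset_criticalConeTau hτ.le hg)

/-- **equivalent second-order conditions.** Under the structural decomposition
of `j''` and the first-order condition at `ū`, positivity of `j''(ū)` on `C_ū \ {0}` is
equivalent to the existence of `μ > 0` and `τ > 0` such that
`j''(ū)(g,g) ≥ μ‖g‖²` for all `g ∈ C_ū^τ`. -/
theorem statement10 (d : ℕ) (hd : d = 2 ∨ d = 3)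
    (Ω : Set (EuclideanSpace ℝ (Fin d)))
    (hΩo : IsOpen Ω) (hΩne : Ω.Nonempty) (hΩb : Bornology.IsBounded Ω)
    (a b : Fin d → ℝ) (hab : ∀ i, a i < b i)
    (ubar : Ld d (volume.restrict Ω))
    (hubar : ubar ∈ Uad d (volume.restrict Ω) a b)
    (O : Set (Ld d (volume.restrict Ω))) (hO : IsOpen O) (hubarO : ubar ∈ O)
    (j : Ld d (volume.restrict Ω) → ℝ)
    (j' : Ld d (volume.restrict Ω) → (Ld d (volume.restrict Ω) →L[ℝ] ℝ))
    (j'' : Ld d (volume.restrict Ω) →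
      (Ld d (volume.restrict Ω) →L[ℝ] (Ld d (volume.restrict Ω) →L[ℝ] ℝ)))
    (hj' : ∀ u ∈ O, HasFDerivAt j (j' u) u)
    (hj'' : ∀ u ∈ O, HasFDerivAt j' (j'' u) u)
    (hj''cont : ContinuousOn j'' O)
    (α : ℝ) (hα : 0 < α)
    (Q : Ld d (volume.restrict Ω) → Ld d (volume.restrict Ω) → ℝ)
    (hdecomp : ∀ u ∈ O, ∀ g : Ld d (volume.restrict Ω),
      j'' u g g = α * ‖g‖ ^ 2 + Q u g)
    (hQcont : ∀ (us : ℕ → Ld d (volume.restrict Ω)) (u : Ld d (volume.restrict Ω))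
      (gs : ℕ → Ld d (volume.restrict Ω)) (g : Ld d (volume.restrict Ω)),
      (∀ k, us k ∈ O) → u ∈ O → Tendsto us atTop (𝓝 u) →
      WeakConvL2 d (volume.restrict Ω) gs g →
      Tendsto (fun k => Q (us k) (gs k)) atTop (𝓝 (Q u g)))
    (hfo : ∀ u ∈ Uad d (volume.restrict Ω) a b, 0 ≤ j' ubar (u - ubar))
    (dbar : Ld d (volume.restrict Ω))
    (hdbar : ∀ v : Ld d (volume.restrict Ω),
      j' ubar v = ∫ x, (⟪dbar x, v x⟫ : ℝ) ∂(volume.restrict Ω)) :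
    (∀ g ∈ CriticalCone d (volume.restrict Ω) a b ubar dbar, g ≠ 0 → 0 < j'' ubar g g)
    ↔
    (∃ μ > (0 : ℝ), ∃ τ > (0 : ℝ),
      ∀ g ∈ CriticalConeTau d (volume.restrict Ω) a b ubar dbar τ,
        μ * ‖g‖ ^ 2 ≤ j'' ubar g g) :=
  statement10_general d Ω a b ubar O hubarO j'' α hα Q hdecomp hQcont dbar
end
end
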